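/- arXiv:1205.5543 — 2 statements merged into one kernel-verified Lean document; each statement's English description precedes it below -/
import Mathlib

section
/- For an exponential staircase rank one construction of type I with frequencies ω_n(j) = (m_n/ε_n²)·p_n·exp(ε_n·j/p_n), and for every s ∈ (0,1], ∫_ℝ ( (2/p_n)·Σ_{j=0}^{p_n−1} cos²(ω_n(j)·t) − 1 )² dμ_s(t) → 0 as n → ∞. -/
/-!
Since `2 cos² x - 1 = cos 2x`, the integrand is the square of the average of the
`cos (2 ω_n(j) t)`. Expanding the square, the `(j, k)` term integrates to
`(F(2ω_n(j) - 2ω_n(k)) + F(2ω_n(j) + 2ω_n(k)))/2`, where `F(u) = ∫ cos(ut) dμ_s(t)`. As `μ_s` has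
an integrable density, `F` vanishes at infinity (Riemann–Lebesgue), and distinct frequencies are
at least `m_n/ε_n → ∞` apart, so the off-diagonal terms are uniformly small, while the `p_n`
diagonal terms contribute `O(1/p_n)`.
-/

open MeasureTheory Filter Topology Finset

/-- The Fejér-type kernel `K_s(θ) = (s/(2π))·(sin(sθ/2)/(sθ/2))²`, with `K_s(0) = s/(2π)`. -/
noncomputable def Ks (s θ : ℝ) : ℝ :=
  (s / (2 * Real.pi)) * (if θ = 0 then 1 else (Real.sin (s * θ / 2) / (s * θ / 2)) ^ 2)

/-- The measure `μ_s` on `ℝ` with density `K_s` with respect to Lebesgue measure. -/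
noncomputable def mus (s : ℝ) : Measure ℝ :=
  (volume : Measure ℝ).withDensity fun θ => ENNReal.ofReal (Ks s θ)

/-- The frequencies `ω_n(j) = (m_n/ε_n²)·p_n·exp(ε_n·j/p_n)` of an exponential staircase
rank one construction of type I. -/
noncomputable def staircaseOmega (m p : ℕ → ℕ) (ε : ℕ → ℚ) (n j : ℕ) : ℝ :=
  ((m n : ℝ) / (ε n : ℝ) ^ 2) * (p n : ℝ) * Real.exp ((ε n : ℝ) * (j : ℝ) / (p n : ℝ))

/-- The polynomials `P_n(θ) = p_n^{-1/2}·Σ_{j=0}^{p_n-1} exp(iθ(ω_n(j) − ω_n(0)))` of an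
exponential staircase rank one construction of type I. -/
noncomputable def staircaseP (m p : ℕ → ℕ) (ε : ℕ → ℚ) (n : ℕ) (θ : ℝ) : ℂ :=
  (1 / Real.sqrt (p n) : ℝ) * ∑ j ∈ Finset.range (p n),
    Complex.exp (Complex.I * (θ : ℂ) *
      ((staircaseOmega m p ε n j - staircaseOmega m p ε n 0 : ℝ) : ℂ))

open Real

lemma tendsto_integral_cos_mul_cocompact {f : ℝ → ℝ} (hf : Integrable f) :
    Tendsto (fun u => ∫ t, f t * cos (u * t)) (cocompact ℝ) (𝓝 0) := by
  have hre := (Complex.continuous_re.tendsto 0).comp <|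
    (Real.tendsto_integral_exp_smul_cocompact fun t => (f t : ℂ)).comp <|
      tendsto_cocompact_mul_right₀ (inv_ne_zero (mul_ne_zero two_ne_zero pi_ne_zero))
  refine (Complex.zero_re ▸ hre).congr fun u => ?_
  have hint : Integrable (fun t => fourierChar (-(t * (u * (2 * π)⁻¹))) • (f t : ℂ)) := by
    simpa [mul_comm] using (fourierIntegral_convergent_iff (u * (2 * π)⁻¹)).2 hf.ofReal
  simp only [Function.comp_apply]
  rw [← RCLike.re_to_complex, ← integral_re hint]
  congr 1 with t
  rw [Circle.smul_def, fourierChar_apply, smul_eq_mul, RCLike.re_to_complex, Complex.re_mul_ofReal,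
    Complex.exp_ofReal_mul_I_re, ← cos_neg, mul_comm]
  congr 2
  field_simp

section Fejer

variable {s : ℝ}

lemma Ks_nonneg (hs : 0 ≤ s) (θ : ℝ) : 0 ≤ Ks s θ := by
  unfold Ks
  positivity

lemma measurable_Ks (s : ℝ) : Measurable (Ks s) := by
  unfold Ks
  exact (Measurable.ite (measurableSet_singleton 0) measurable_const (by fun_prop)).const_mul _

lemma Ks_le (hs : 0 ≤ s) (θ : ℝ) : Ks s θ ≤ s / (2 * π) := by
  unfold Ks
  refine mul_le_of_le_one_right (by positivity) ?_
  split_ifs with hθ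
  · exact le_rfl
  · rw [div_pow]
    exact div_le_one_of_le₀ sin_sq_le_sq (sq_nonneg _)

lemma Ks_mul_sq_le (hs : 0 < s) (θ : ℝ) : Ks s θ * θ ^ 2 ≤ 2 / (π * s) := by
  rcases eq_or_ne θ 0 with rfl | hθ
  · rw [zero_pow two_ne_zero, mul_zero]
    positivity
  have hsθ : s * θ / 2 ≠ 0 := by positivity
  have hKs : Ks s θ * θ ^ 2 = 2 / (π * s) * sin (s * θ / 2) ^ 2 := by
    rw [Ks, if_neg hθ]
    field_simp
  rw [hKs]
  exact mul_le_of_le_one_right (by positivity) (sin_sq_le_one _)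

lemma Ks_le_inv_one_add_sq (hs : 0 < s) (θ : ℝ) :
    Ks s θ ≤ (s / (2 * π) + 2 / (π * s)) * (1 + θ ^ 2)⁻¹ := by
  rw [← div_eq_mul_inv, le_div_iff₀ (by positivity), mul_one_add]
  exact add_le_add (Ks_le hs.le θ) (Ks_mul_sq_le hs θ)

lemma integrable_Ks (hs : 0 < s) : Integrable (Ks s) := by
  refine (integrable_inv_one_add_sq.const_mul (s / (2 * π) + 2 / (π * s))).mono'
    (measurable_Ks s).aestronglyMeasurable (ae_of_all _ fun θ => ?_)
  rw [norm_of_nonneg (Ks_nonneg hs.le θ)]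
  exact Ks_le_inv_one_add_sq hs θ

lemma isFiniteMeasure_mus (hs : 0 < s) : IsFiniteMeasure (mus s) :=
  isFiniteMeasure_withDensity_ofReal (integrable_Ks hs).hasFiniteIntegral

lemma integral_mus (hs : 0 ≤ s) (g : ℝ → ℝ) : ∫ t, g t ∂mus s = ∫ t, Ks s t * g t := by
  rw [mus, integral_withDensity_eq_integral_toReal_smul (measurable_Ks s).ennreal_ofReal
    (ae_of_all _ fun _ => ENNReal.ofReal_lt_top)]
  simp only [ENNReal.toReal_ofReal (Ks_nonneg hs _), smul_eq_mul]

lemma tendsto_integral_cos_mul_mus (hs : 0 < s) :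
    Tendsto (fun u => ∫ t, cos (u * t) ∂mus s) (cocompact ℝ) (𝓝 0) := by
  simp_rw [integral_mus hs.le]
  exact tendsto_integral_cos_mul_cocompact (integrable_Ks hs)

end Fejer

section CosineAverages

variable {μ : Measure ℝ} [IsFiniteMeasure μ]

lemma integrable_cos_mul (u : ℝ) : Integrable (fun t => cos (u * t)) μ :=
  .of_bound (by fun_prop) 1 (ae_of_all _ fun _ => abs_cos_le_one _)

lemma integrable_cos_mul_mul_cos_mul (a b : ℝ) :
    Integrable (fun t => cos (a * t) * cos (b * t)) μ :=
  .of_bound (by fun_prop) 1 (ae_of_all _ fun _ => by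
    rw [norm_mul]
    exact mul_le_one₀ (abs_cos_le_one _) (norm_nonneg _) (abs_cos_le_one _))

lemma abs_integral_cos_mul_le (u : ℝ) : |∫ t, cos (u * t) ∂μ| ≤ μ.real Set.univ := by
  simpa using norm_integral_le_of_norm_le_const (μ := μ) (f := fun t => cos (u * t)) (C := 1)
    (ae_of_all _ fun t => abs_cos_le_one (u * t))

lemma integral_cos_mul_mul_cos_mul (a b : ℝ) :
    ∫ t, cos (a * t) * cos (b * t) ∂μ
      = ((∫ t, cos ((a - b) * t) ∂μ) + ∫ t, cos ((a + b) * t) ∂μ) / 2 := by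
  rw [← integral_add (integrable_cos_mul _) (integrable_cos_mul _), ← integral_div]
  congr 1 with t
  rw [sub_mul, add_mul, cos_sub, cos_add]
  ring

lemma integral_sq_average_cos (P : ℕ) (ω : ℕ → ℝ) :
    ∫ t, ((∑ j ∈ range P, cos (ω j * t)) / P) ^ 2 ∂μ
      = (∑ j ∈ range P, ∑ k ∈ range P, ∫ t, cos (ω j * t) * cos (ω k * t) ∂μ) / P ^ 2 := by
  simp_rw [div_pow, sq, sum_mul_sum]
  rw [integral_div, integral_finsetSum _ fun j _ =>
    integrable_finsetSum _ fun k _ => integrable_cos_mul_mul_cos_mul _ _]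
  congr 1
  refine sum_congr rfl fun j _ => integral_finsetSum _ fun k _ => ?_
  exact integrable_cos_mul_mul_cos_mul _ _

lemma integral_sq_average_cos_le {P : ℕ} (hP : P ≠ 0) {ω : ℕ → ℝ} (hω : ∀ j, 0 ≤ ω j)
    {R η : ℝ} (hsep : ∀ j k, j ≠ k → R ≤ |ω j - ω k|)
    (hF : ∀ u, R ≤ |u| → |∫ t, cos (u * t) ∂μ| ≤ η) :
    ∫ t, ((∑ j ∈ range P, cos (ω j * t)) / P) ^ 2 ∂μ ≤ μ.real Set.univ / P + η := by
  set M := μ.real Set.univ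
  have hη : 0 ≤ η := (abs_nonneg _).trans (hF |R| (by rw [abs_abs]; exact le_abs_self R))
  have hterm : ∀ j k, |∫ t, cos (ω j * t) * cos (ω k * t) ∂μ| ≤ (if j = k then M else 0) + η := by
    intro j k
    rw [integral_cos_mul_mul_cos_mul, abs_div, abs_two]
    have hsum := abs_add_le (∫ t, cos ((ω j - ω k) * t) ∂μ) (∫ t, cos ((ω j + ω k) * t) ∂μ)
    split_ifs with hjk
    · linarith [abs_integral_cos_mul_le (μ := μ) (ω j - ω k),
        abs_integral_cos_mul_le (μ := μ) (ω j + ω k)]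
    · have hdiff := hsep j k hjk
      have hplus : R ≤ |ω j + ω k| := hdiff.trans <| by
        rw [abs_of_nonneg (add_nonneg (hω j) (hω k))]
        exact abs_sub_le_iff.2 ⟨by linarith [hω k], by linarith [hω j]⟩
      linarith [hF _ hdiff, hF _ hplus]
  have hP' : (0 : ℝ) < P := by positivity
  calc ∫ t, ((∑ j ∈ range P, cos (ω j * t)) / P) ^ 2 ∂μ
      ≤ |∑ j ∈ range P, ∑ k ∈ range P, ∫ t, cos (ω j * t) * cos (ω k * t) ∂μ| / P ^ 2 := by
        rw [integral_sq_average_cos]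
        gcongr
        exact le_abs_self _
    _ ≤ (∑ j ∈ range P, ∑ k ∈ range P, ((if j = k then M else 0) + η)) / P ^ 2 := by
        gcongr
        exact (abs_sum_le_sum_abs _ _).trans <| sum_le_sum fun j _ =>
          (abs_sum_le_sum_abs _ _).trans <| sum_le_sum fun k _ => hterm j k
    _ = M / P + η := by
        have hdiag : ∑ j ∈ range P, ∑ k ∈ range P, (if j = k then M else 0) = P * M := by
          rw [sum_congr rfl fun j hj => by rw [sum_ite_eq, if_pos hj]]
          simp
        rw [sum_congr rfl fun j _ => sum_add_distrib, sum_add_distrib, hdiag]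
        simp only [sum_const, card_range, nsmul_eq_mul]
        field_simp

lemma exists_forall_abs_le_of_tendsto_cocompact {f : ℝ → ℝ}
    (hf : Tendsto f (cocompact ℝ) (𝓝 0)) {η : ℝ} (hη : 0 < η) :
    ∃ R, ∀ u, R ≤ |u| → |f u| ≤ η := by
  rw [cocompact_eq_atBot_atTop, ← comap_abs_atTop] at hf
  obtain ⟨R, -, hR⟩ := (atTop_basis.comap _).eventually_iff.1
    (hf.eventually (Metric.closedBall_mem_nhds 0 hη))
  exact ⟨R, fun u hu => by simpa using hR hu⟩

theorem tendsto_integral_sq_average_cos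
    (hμ : Tendsto (fun u => ∫ t, cos (u * t) ∂μ) (cocompact ℝ) (𝓝 0))
    {P : ℕ → ℕ} (hP : Tendsto P atTop atTop) {ω : ℕ → ℕ → ℝ} (hω : ∀ n j, 0 ≤ ω n j)
    {δ : ℕ → ℝ} (hδ : Tendsto δ atTop atTop) (hsep : ∀ n j k, j ≠ k → δ n ≤ |ω n j - ω n k|) :
    Tendsto (fun n => ∫ t, ((∑ j ∈ range (P n), cos (ω n j * t)) / P n) ^ 2 ∂μ)
      atTop (𝓝 0) := by
  refine tendsto_order.2 ⟨fun a ha => Eventually.of_forall fun n =>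
    ha.trans_le (integral_nonneg fun t => sq_nonneg _), fun b hb => ?_⟩
  obtain ⟨R, hR⟩ := exists_forall_abs_le_of_tendsto_cocompact hμ (half_pos hb)
  have hP' : Tendsto (fun n => (P n : ℝ)) atTop atTop := tendsto_natCast_atTop_atTop.comp hP
  filter_upwards [hδ.eventually_ge_atTop R, hP.eventually_ne_atTop 0,
    ((tendsto_const_nhds (x := μ.real Set.univ)).div_atTop hP').eventually
      (gt_mem_nhds (half_pos hb))] with n hδn hPn hMn
  calc _ ≤ μ.real Set.univ / P n + b / 2 :=
        integral_sq_average_cos_le hPn (hω n) (fun j k hjk => hδn.trans (hsep n j k hjk)) hR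
    _ < b := by linarith

end CosineAverages

lemma sub_le_exp_sub_exp {x y : ℝ} (hx : 0 ≤ x) (hxy : x ≤ y) : y - x ≤ exp y - exp x := by
  have hexp : exp y = exp x * exp (y - x) := by rw [← exp_add, add_sub_cancel]
  nlinarith [add_one_le_exp (y - x), one_le_exp hx]

lemma two_div_mul_sum_cos_sq_sub_one {P : ℕ} (hP : P ≠ 0) (ω : ℕ → ℝ) (t : ℝ) :
    2 / P * ∑ j ∈ range P, cos (ω j * t) ^ 2 - 1 = (∑ j ∈ range P, cos (2 * ω j * t)) / P := by
  have hcos (j : ℕ) : cos (ω j * t) ^ 2 = 1 / 2 + cos (2 * ω j * t) / 2 := by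
    rw [cos_sq, mul_assoc]
  simp_rw [hcos, sum_add_distrib, sum_const, card_range, nsmul_eq_mul, ← sum_div]
  generalize ∑ j ∈ range P, cos (2 * ω j * t) = S
  field_simp
  ring

lemma staircaseOmega_nonneg (m p : ℕ → ℕ) (ε : ℕ → ℚ) (n j : ℕ) :
    0 ≤ staircaseOmega m p ε n j := by
  unfold staircaseOmega
  positivity

lemma div_le_staircaseOmega_sub {m p : ℕ → ℕ} {ε : ℕ → ℚ} {n : ℕ} (hε : 0 < ε n) (hp : 0 < p n)
    {j k : ℕ} (hkj : k < j) :
    (m n : ℝ) / ε n ≤ staircaseOmega m p ε n j - staircaseOmega m p ε n k := by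
  have hε' : (0 : ℝ) < ε n := by exact_mod_cast hε
  have hp' : (0 : ℝ) < p n := by exact_mod_cast hp
  have hjk : (1 : ℝ) ≤ j - k := by
    rw [le_sub_iff_add_le']
    exact_mod_cast hkj
  calc (m n : ℝ) / ε n ≤ m n / ε n * (j - k) := le_mul_of_one_le_right (by positivity) hjk
    _ = m n / (ε n) ^ 2 * p n * (ε n * j / p n - ε n * k / p n) := by
        field_simp
    _ ≤ m n / (ε n) ^ 2 * p n * (exp (ε n * j / p n) - exp (ε n * k / p n)) :=
        mul_le_mul_of_nonneg_left (sub_le_exp_sub_exp (by positivity) (by gcongr))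
          (by positivity)
    _ = staircaseOmega m p ε n j - staircaseOmega m p ε n k := by
        simp only [staircaseOmega]
        ring

lemma div_le_abs_staircaseOmega_sub {m p : ℕ → ℕ} {ε : ℕ → ℚ} {n : ℕ} (hε : 0 < ε n)
    (hp : 0 < p n) {j k : ℕ} (hjk : j ≠ k) :
    (m n : ℝ) / ε n ≤ |staircaseOmega m p ε n j - staircaseOmega m p ε n k| := by
  rcases hjk.lt_or_gt with h | h
  · rw [abs_sub_comm]
    exact (div_le_staircaseOmega_sub hε hp h).trans (le_abs_self _)
  · exact (div_le_staircaseOmega_sub hε hp h).trans (le_abs_self _)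

theorem staircase_cos_sq_variance_general
    (m p : ℕ → ℕ) (ε : ℕ → ℚ)
    (hp : ∀ n, 0 < p n) (hε : ∀ n, 0 < ε n)
    (hmtop : Tendsto m atTop atTop) (hptop : Tendsto p atTop atTop)
    (hε0 : Tendsto (fun n => (ε n : ℝ)) atTop (nhds 0))
    : ∀ s : ℝ, s ∈ Set.Ioc (0 : ℝ) 1 →
      Tendsto
        (fun n => ∫ t,
          ((2 / (p n : ℝ)) * ∑ j ∈ Finset.range (p n),
              Real.cos (staircaseOmega m p ε n j * t) ^ 2 - 1) ^ 2 ∂(mus s))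
        atTop (nhds 0) := by
  rintro s ⟨hs, -⟩
  have := isFiniteMeasure_mus hs
  have hδ : Tendsto (fun n => (m n : ℝ) / ε n) atTop atTop :=
    tendsto_atTop_mono' _ ((hε0.eventually (eventually_le_nhds one_pos)).mono fun n hn =>
      le_div_self (Nat.cast_nonneg _) (Rat.cast_pos.2 (hε n)) hn)
      (tendsto_natCast_atTop_atTop.comp hmtop)
  refine (tendsto_integral_sq_average_cos (tendsto_integral_cos_mul_mus hs) hptop
    (ω := fun n j => 2 * staircaseOmega m p ε n j)
    (fun n j => mul_nonneg zero_le_two (staircaseOmega_nonneg m p ε n j)) hδ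
    fun n j k hjk => ?_).congr fun n => ?_
  · rw [← mul_sub, abs_mul, abs_two]
    linarith [div_le_abs_staircaseOmega_sub (m := m) (hε n) (hp n) hjk, abs_nonneg
      (staircaseOmega m p ε n j - staircaseOmega m p ε n k)]
  · simp only [two_div_mul_sum_cos_sq_sub_one (hp n).ne', mul_assoc]

/-- for an exponential staircase rank one construction of type I,
`∫ ((2/p_n)·Σ_j cos²(ω_n(j)t) − 1)² dμ_s → 0`. -/
theorem staircase_cos_sq_variance
    (m p : ℕ → ℕ) (ε : ℕ → ℚ) (h : ℕ → ℝ)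
    (hm : ∀ n, 0 < m n) (hp : ∀ n, 0 < p n) (hε : ∀ n, 0 < ε n)
    (hmtop : Tendsto m atTop atTop) (hptop : Tendsto p atTop atTop)
    (hε0 : Tendsto (fun n => (ε n : ℝ)) atTop (nhds 0))
    (hh0 : h 0 = 1)
    (hspacer_nonneg : ∀ n, ∀ q < p n,
      0 ≤ staircaseOmega m p ε n (q + 1) - staircaseOmega m p ε n q - h n)
    (hh : ∀ n, h (n + 1) = (p n : ℝ) * h n +
      ∑ q ∈ Finset.range (p n),
        (staircaseOmega m p ε n (q + 1) - staircaseOmega m p ε n q - h n))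
    (hcond1 : ∀ n, (ε n : ℝ) * h n ≤ (m n : ℝ))
    (hcond2 : Tendsto (fun n => Real.log (p n) / (m n : ℝ)) atTop (nhds 0))
    (hcond3 : ∀ n, (p n : ℝ) < (m n : ℝ) / (ε n : ℝ) →
      Real.log (p n) / (p n : ℝ) ≤ (ε n : ℝ))
    : ∀ s : ℝ, s ∈ Set.Ioc (0 : ℝ) 1 →
      Tendsto
        (fun n => ∫ t,
          ((2 / (p n : ℝ)) * ∑ j ∈ Finset.range (p n),
              Real.cos (staircaseOmega m p ε n j * t) ^ 2 - 1) ^ 2 ∂(mus s))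
        atTop (nhds 0) :=
  staircase_cos_sq_variance_general m p ε hp hε hmtop hptop hε0
end

section
/- For every real number C ≥ 1 and all integers p ≥ 2 and k ≥ 1, the number of k-tuples (α_1, …, α_k) of integers with 1 ≤ α_i ≤ p for all i and α_1·α_2·…·α_k ≤ C is at most C·(1 + log p)^{k−1}. -/
/-!
Split off the first entry `a` of a tuple: the remaining `k`-tuple has product at most `C / a`.
By induction, the number of `(k + 1)`-tuples with entries in a set `s` of positive integers
and product at most `C` is at most `C * (∑ a ∈ s, 1 / a) ^ k`, and for `s = {1, …, p}` this
sum is the harmonic number `H_p ≤ 1 + log p`.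
-/

open Finset

noncomputable def smallProductTuples (s : Finset ℕ) (k : ℕ) (C : ℝ) : Finset (Fin k → ℕ) :=
  {α ∈ Fintype.piFinset fun _ => s | ((∏ i, α i : ℕ) : ℝ) ≤ C}

variable {s : Finset ℕ}

lemma card_smallProductTuples_one_le (hs : 0 ∉ s) {C : ℝ} (hC : 0 ≤ C) :
    ((smallProductTuples s 1 C).card : ℝ) ≤ C := by
  have hmaps : Set.MapsTo (fun α : Fin 1 → ℕ => α 0) (smallProductTuples s 1 C)
      (Icc 1 ⌊C⌋₊) := by
    intro α hα
    simp only [smallProductTuples, coe_filter, Fintype.mem_piFinset, Fin.prod_univ_one] at hα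
    exact mem_Icc.2 ⟨Nat.one_le_iff_ne_zero.2 fun h => hs (h ▸ hα.1 0), Nat.le_floor hα.2⟩
  have hinj : Set.InjOn (fun α : Fin 1 → ℕ => α 0) (smallProductTuples s 1 C) :=
    fun α _ β _ h => funext fun i => Subsingleton.elim i 0 ▸ h
  calc ((smallProductTuples s 1 C).card : ℝ) ≤ (Icc 1 ⌊C⌋₊).card := by
        exact_mod_cast card_le_card_of_injOn _ hmaps hinj
    _ = ⌊C⌋₊ := by simp
    _ ≤ C := Nat.floor_le hC

lemma smallProductTuples_succ_subset (hs : 0 ∉ s) (k : ℕ) (C : ℝ) :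
    smallProductTuples s (k + 1) C ⊆
      (s.sigma fun a => smallProductTuples s k (C / a)).image
        fun x => Fin.cons x.1 x.2 := by
  intro α hα
  simp only [smallProductTuples, mem_filter, Fin.mem_piFinset_iff_zero_tail,
    Fin.prod_univ_succ, Nat.cast_mul] at hα
  obtain ⟨⟨h0, htail⟩, hprod⟩ := hα
  have hpos : (0 : ℝ) < α 0 := by
    exact_mod_cast Nat.pos_of_ne_zero fun h => hs (h ▸ h0)
  refine mem_image.2 ⟨⟨α 0, Fin.tail α⟩, mem_sigma.2 ⟨h0, ?_⟩, Fin.cons_self_tail α⟩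
  exact mem_filter.2 ⟨htail, (le_div_iff₀' hpos).2 hprod⟩

lemma card_smallProductTuples_succ_le (hs : 0 ∉ s) (k : ℕ) (C : ℝ) :
    (smallProductTuples s (k + 1) C).card ≤ ∑ a ∈ s, (smallProductTuples s k (C / a)).card :=
  calc (smallProductTuples s (k + 1) C).card
      ≤ ((s.sigma fun a => smallProductTuples s k (C / a)).image _).card :=
        card_le_card (smallProductTuples_succ_subset hs k C)
    _ ≤ (s.sigma fun a => smallProductTuples s k (C / a)).card := card_image_le
    _ = _ := card_sigma _ _

theorem card_smallProductTuples_le (hs : 0 ∉ s) (k : ℕ) {C : ℝ} (hC : 0 ≤ C) :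
    ((smallProductTuples s (k + 1) C).card : ℝ) ≤ C * (∑ a ∈ s, (a : ℝ)⁻¹) ^ k := by
  induction k generalizing C with
  | zero => simpa using card_smallProductTuples_one_le hs hC
  | succ k ih =>
    calc ((smallProductTuples s (k + 2) C).card : ℝ)
        ≤ ∑ a ∈ s, ((smallProductTuples s (k + 1) (C / a)).card : ℝ) := by
          exact_mod_cast card_smallProductTuples_succ_le hs (k + 1) C
      _ ≤ ∑ a ∈ s, C / a * (∑ b ∈ s, (b : ℝ)⁻¹) ^ k :=
          sum_le_sum fun a _ => ih (by positivity)
      _ = C * (∑ a ∈ s, (a : ℝ)⁻¹) ^ (k + 1) := by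
          simp_rw [div_eq_mul_inv]
          rw [← sum_mul, ← mul_sum]
          ring

lemma sum_Icc_inv_le_one_add_log (p : ℕ) :
    ∑ a ∈ Icc 1 p, (a : ℝ)⁻¹ ≤ 1 + Real.log p := by
  simpa [harmonic_eq_sum_Icc] using harmonic_le_one_add_log p

theorem count_tuples_with_small_product_general
    (C : ℝ) (hC : 1 ≤ C) (p k : ℕ) :
    ((Finset.filter (fun α : Fin k → ℕ => ((∏ i, α i : ℕ) : ℝ) ≤ C)
        (Fintype.piFinset fun _ : Fin k => Finset.Icc 1 p)).card : ℝ) ≤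
      C * (1 + Real.log p) ^ (k - 1) := by
  change ((smallProductTuples (Icc 1 p) k C).card : ℝ) ≤ _
  cases k with
  | zero =>
    calc ((smallProductTuples (Icc 1 p) 0 C).card : ℝ)
        ≤ (Fintype.piFinset fun _ : Fin 0 => Icc 1 p).card := mod_cast card_filter_le _ _
      _ ≤ C * (1 + Real.log p) ^ (0 - 1) := by simpa using hC
  | succ k =>
    calc ((smallProductTuples (Icc 1 p) (k + 1) C).card : ℝ)
        ≤ C * (∑ a ∈ Icc 1 p, (a : ℝ)⁻¹) ^ k := 
          card_smallProductTuples_le (by simp) k (by linarith)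
      _ ≤ C * (1 + Real.log p) ^ (k + 1 - 1) := by
          rw [Nat.add_sub_cancel]
          gcongr
          exact sum_Icc_inv_le_one_add_log p

/-- for `C ≥ 1`, `p ≥ 2`, `k ≥ 1`, the number of `k`-tuples `(α_1, …, α_k)` of
integers with `1 ≤ α_i ≤ p` and `α_1·…·α_k ≤ C` is at most `C·(1 + log p)^{k−1}`. -/
theorem count_tuples_with_small_product
    (C : ℝ) (hC : 1 ≤ C) (p k : ℕ) (hp : 2 ≤ p) (hk : 1 ≤ k) :
    ((Finset.filter (fun α : Fin k → ℕ => ((∏ i, α i : ℕ) : ℝ) ≤ C)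
        (Fintype.piFinset fun _ : Fin k => Finset.Icc 1 p)).card : ℝ) ≤
      C * (1 + Real.log p) ^ (k - 1) :=
  count_tuples_with_small_product_general C hC p k
end
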